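/- Let A=(C,m) be a 3-dimensional toric idealistic cluster, let Q_i be a node of weight m := m_i ≥ 2 whose unique child is P = Q_i(1), of weight m−1, and suppose that the nodes of C proximate to Q_i other than P are exactly the nodes of the form P(2,3^s) or P(3,2^s) belonging to C, that there are m−1 of them in total, and that each has weight 1. If exactly the two labels 2 and 3 occur under Q_i, then χ_i = 0. -/

import Mathlib

open Finset

/-!
Common framework: 3-dimensional toric constellations and toric idealistic clusters.
The edge labels `1, 2, 3` of the paper are encoded as `0, 1, 2 : Fin 3`.
-/

/-- A 3-dimensional toric constellation: a finite rooted tree on nodes `0, …, r−1`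
(node `0` the root, every child having larger index than its parent), each node having
at most three children, the edges from a node to its children carrying pairwise
distinct labels in `Fin 3`.  `label j` is the label of the edge from `parent j` to `j`
(irrelevant for the root). -/
structure ToricConstellation (r : ℕ) where
  parent : Fin r → Fin r
  label : Fin r → Fin 3
  parent_lt : ∀ i : Fin r, 0 < (i : ℕ) → (parent i : ℕ) < (i : ℕ)
  parent_root : ∀ i : Fin r, (i : ℕ) = 0 → parent i = i
  label_distinct : ∀ i j : Fin r, 0 < (i : ℕ) → 0 < (j : ℕ) → i ≠ j →
    parent i = parent j → label i ≠ label j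

namespace ToricConstellation

variable {r : ℕ}

/-- The ordered triple of vectors of `ℤ³` attached to a node: the root carries the
standard basis, and the child along the edge labelled `a` of a node with cone
`(u₁,u₂,u₃)` carries the triple obtained by replacing `u_a` with `u₁+u₂+u₃`. -/
def cone (C : ToricConstellation r) (i : Fin r) : Fin 3 → (Fin 3 → ℤ) :=
  if h : 0 < (i : ℕ) then
    Function.update (cone C (C.parent i)) (C.label i) (∑ a, cone C (C.parent i) a)
  else fun a => Pi.single a 1
termination_by (i : ℕ)
decreasing_by all_goals exact C.parent_lt i h

/-- `v(Q) = u₁ + u₂ + u₃`, the sum of the cone vectors of a node. -/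
def v (C : ToricConstellation r) (i : Fin r) : Fin 3 → ℤ := ∑ a, cone C i a

/-- `Prox C j i` means `j → i`, i.e. `Q_j` is proximate to `Q_i`:
`j ≠ i` and `v(Q_i)` is an entry of `cone(Q_j)`. -/
def Prox (C : ToricConstellation r) (j i : Fin r) : Prop :=
  j ≠ i ∧ ∃ a : Fin 3, cone C j a = v C i

instance (C : ToricConstellation r) (j i : Fin r) : Decidable (C.Prox j i) := by
  unfold Prox; infer_instance

/-- `inChain C i a b j = true` iff `j = Q_i(a, b^t)` for some `t ≥ 0`, i.e. `j` is
reached from `i` by one edge labelled `a` followed by `t` edges labelled `b`. -/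
def inChain (C : ToricConstellation r) (i : Fin r) (a b : Fin 3) (j : Fin r) : Bool :=
  if h : 0 < (j : ℕ) then
    (decide (C.parent j = i) && decide (C.label j = a)) ||
      (decide (C.label j = b) && inChain C i a b (C.parent j))
  else false
termination_by (j : ℕ)
decreasing_by exact C.parent_lt j h

/-- `LinProx C j i` means `j ↠ i`, i.e. `Q_j` is linearly proximate to `Q_i`. -/
def LinProx (C : ToricConstellation r) (j i : Fin r) : Prop :=
  ∃ a b : Fin 3, a ≠ b ∧ inChain C i a b j = true

instance (C : ToricConstellation r) (j i : Fin r) : Decidable (C.LinProx j i) := by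
  unfold LinProx; infer_instance

/-- `j` is a child of `i`. -/
def IsChild (C : ToricConstellation r) (j i : Fin r) : Prop :=
  0 < (j : ℕ) ∧ C.parent j = i

instance (C : ToricConstellation r) (j i : Fin r) : Decidable (C.IsChild j i) := by
  unfold IsChild; infer_instance

/-- The set `S_i` of labels of the edges on the path from the root to `Q_i`. -/
def labelsUnder (C : ToricConstellation r) (i : Fin r) : Finset (Fin 3) :=
  if h : 0 < (i : ℕ) then insert (C.label i) (labelsUnder C (C.parent i)) else ∅
termination_by (i : ℕ)
decreasing_by exact C.parent_lt i h

/-- `i` is a weak ancestor of `j` (`i = j` or `i` a strict ancestor of `j`). -/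
def anc (C : ToricConstellation r) (i j : Fin r) : Bool :=
  decide (i = j) || (if h : 0 < (j : ℕ) then anc C i (C.parent j) else false)
termination_by (j : ℕ)
decreasing_by exact C.parent_lt j h

/-- The set of nodes weakly above `i` (`i` together with its descendants). -/
def weakAbove (C : ToricConstellation r) (i : Fin r) : Finset (Fin r) :=
  univ.filter (fun j => anc C i j = true)

end ToricConstellation

/-- A 3-dimensional toric cluster: a toric constellation together with a positive
integer weight for each node. -/
structure ToricCluster (r : ℕ) extends ToricConstellation r where
  m : Fin r → ℤ
  m_pos : ∀ j, 0 < m j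

namespace ToricCluster

open ToricConstellation

variable {r : ℕ}

/-- `M_{Q_i}(a,b) := Σ_{t ≥ 0, Q_i(a,b^t) ∈ C} m_{Q_i(a,b^t)}`. -/
def M (A : ToricCluster r) (i : Fin r) (a b : Fin 3) : ℤ :=
  ∑ j ∈ univ.filter (fun j => inChain A.toToricConstellation i a b j = true), A.m j

/-- The cluster is idealistic: the linear proximity inequalities
`M_{Q_i}(a,b) + M_{Q_i}(b,a) ≤ m_{Q_i}` hold. -/
def Idealistic (A : ToricCluster r) : Prop :=
  ∀ i : Fin r, ∀ a b : Fin 3, a ≠ b → A.M i a b + A.M i b a ≤ A.m i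

/-- The set of nodes `j` proximate to `i` (`j → i`). -/
def proxSet (A : ToricCluster r) (i : Fin r) : Finset (Fin r) :=
  univ.filter (fun j => Prox A.toToricConstellation j i)

/-- `B_i`: the set of nodes to which `i` is proximate. -/
def Bset (A : ToricCluster r) (i : Fin r) : Finset (Fin r) :=
  univ.filter (fun j => Prox A.toToricConstellation i j)

/-- `A_i`: the children `k` of `i` for which there is no `l` with `i → l` and `k → l`. -/
def Aset (A : ToricCluster r) (i : Fin r) : Finset (Fin r) :=
  univ.filter (fun k => IsChild A.toToricConstellation k i ∧
    ¬ ∃ l, Prox A.toToricConstellation i l ∧ Prox A.toToricConstellation k l)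

/-- The Euler characteristic `χ_i = χ(E_i°)`. -/
def chi (A : ToricCluster r) (i : Fin r) : ℤ :=
  3 + A.m i * (A.m i - 3)
    - ∑ j ∈ A.proxSet i, A.m j * (A.m j - 1)
    + ∑ j ∈ A.proxSet i,
        (A.m j - ∑ k ∈ (A.proxSet i).filter
          (fun k => LinProx A.toToricConstellation k j), A.m k)
    + ∑ j ∈ A.Bset i,
        (A.m i - ∑ k ∈ (A.proxSet j).filter
          (fun k => LinProx A.toToricConstellation k i), A.m k)
    - ((A.Aset i).card : ℤ) - 2 * ((A.Bset i).card : ℤ)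
    + (((A.Bset i).card.choose 2 : ℕ) : ℤ)

/-- `D_i = m_i² − Σ_{j→i} m_j²`. -/
def D (A : ToricCluster r) (i : Fin r) : ℤ :=
  A.m i ^ 2 - ∑ j ∈ A.proxSet i, A.m j ^ 2

/-- `r_{ab} = m_i − M_{Q_i}(a,b) − M_{Q_i}(b,a)`. -/
def rab (A : ToricCluster r) (i : Fin r) (a b : Fin 3) : ℤ :=
  A.m i - A.M i a b - A.M i b a

/-- `R_i = r̂_{12} + r̂_{13} + r̂_{23}`, where `r̂_{ab} = r_{ab}` if the remaining third
label does not appear under `Q_i`, and `r̂_{ab} = 0` otherwise.  (Labels `1,2,3` are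
encoded as `0,1,2 : Fin 3`.) -/
def R (A : ToricCluster r) (i : Fin r) : ℤ :=
  (if (2 : Fin 3) ∉ labelsUnder A.toToricConstellation i then A.rab i 0 1 else 0)
  + (if (1 : Fin 3) ∉ labelsUnder A.toToricConstellation i then A.rab i 0 2 else 0)
  + (if (0 : Fin 3) ∉ labelsUnder A.toToricConstellation i then A.rab i 1 2 else 0)

/-- `T_i = 3 − #A_i − 2·#B_i + (#B_i choose 2)`. -/
def T (A : ToricCluster r) (i : Fin r) : ℤ :=
  3 - ((A.Aset i).card : ℤ) - 2 * ((A.Bset i).card : ℤ)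
    + (((A.Bset i).card.choose 2 : ℕ) : ℤ)

/-- The nodes to which `i` is proximate, of smaller index: the sums in the recursive
definitions of the numerical data range over the nodes to which `i` is proximate,
which are ancestors of `i` and hence have smaller index (making the recursion
well-founded). -/
def anteSet (A : ToricCluster r) (i : Fin r) : Finset (Fin r) :=
  univ.filter (fun j => (j : ℕ) < (i : ℕ) ∧ Prox A.toToricConstellation i j)

/-- The numerical datum `N_i := m_i + Σ_{j : i→j} N_j`. -/
def N (A : ToricCluster r) (i : Fin r) : ℤ :=
  A.m i + ∑ j ∈ (A.anteSet i).attach, N A j.1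
termination_by (i : ℕ)
decreasing_by
  have hj := j.2
  simp only [anteSet, Finset.mem_filter] at hj
  exact hj.2.1

/-- The numerical datum `ν_i := 3 + Σ_{j : i→j} (ν_j − 1)`. -/
def nu (A : ToricCluster r) (i : Fin r) : ℤ :=
  3 + ∑ j ∈ (A.anteSet i).attach, (nu A j.1 - 1)
termination_by (i : ℕ)
decreasing_by
  have hj := j.2
  simp only [anteSet, Finset.mem_filter] at hj
  exact hj.2.1

end ToricCluster


open ToricConstellation ToricCluster

/-!
As the labels under `Q_i` are `2` and `3`, the cone of `Q_i` is `(e₁, v(Q'), v(Q''))` for two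
nodes `Q'`, `Q''`, so `B_i = {Q', Q''}`; the cone `(v(Q_i), v(Q'), v(Q''))` of `P` shows that `P`
is proximate to both, whence `A_i = ∅`. Proximity can be read off the cones because `v` is
injective: in the dual basis of a cone one sees that the open cones of the children of a node are
disjoint and miss the `v` of the node.

Idealisticity and `m_P = m - 1` leave room for at most two nodes in a chain `Q_i(1, b^t)`, so the
nodes linearly proximate to `Q_i` are `P` and the set `L` of its children along the labels `2`,
`3`, each of which is proximate to exactly one of `Q'`, `Q''`. Inside the chains `P(2, 3^s)` and
`P(3, 2^s)` a node is linearly proximate only to its parent. Hence the sum over `j → i` in `χ_i`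
is `#L`, the sum over `i → j` is `2 - #L`, and `χ_i = 3 + m(m - 3) - (m - 1)(m - 2) + 2 - 4 + 1`
vanishes.
-/

namespace ToricConstellation

variable {r : ℕ} (C : ToricConstellation r)

theorem induction_on_parent {motive : Fin r → Prop}
    (root : ∀ j : Fin r, ¬ 0 < (j : ℕ) → motive j)
    (step : ∀ j : Fin r, 0 < (j : ℕ) → motive (C.parent j) → motive j) (j : Fin r) :
    motive j := by
  induction j using WellFoundedLT.induction with
  | ind j ih =>
    by_cases hj : 0 < (j : ℕ)
    · exact step j hj (ih _ (C.parent_lt j hj))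
    · exact root j hj

theorem cone_of_pos {i : Fin r} (hi : 0 < (i : ℕ)) :
    C.cone i = Function.update (C.cone (C.parent i)) (C.label i) (C.v (C.parent i)) := by
  rw [cone, dif_pos hi, v]

theorem cone_of_not_pos {i : Fin r} (hi : ¬ 0 < (i : ℕ)) :
    C.cone i = fun a => Pi.single a 1 := by
  rw [cone, dif_neg hi]

theorem cone_of_isChild_of_ne {k p : Fin r} (hk : C.IsChild k p) {c : Fin 3}
    (hc : c ≠ C.label k) : C.cone k c = C.cone p c := by
  rw [C.cone_of_pos hk.1, Function.update_of_ne hc, hk.2]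

theorem cone_label {k : Fin r} (hk : 0 < (k : ℕ)) : C.cone k (C.label k) = C.v (C.parent k) := by
  rw [C.cone_of_pos hk, Function.update_self]

/-- The dual basis of `C.cone i`: replacing `u_a` by `u₁ + u₂ + u₃` replaces every other
dual vector `w_b` by `w_b - w_a`. -/
def dual (i : Fin r) : Fin 3 → Fin 3 → ℤ :=
  if h : 0 < (i : ℕ) then fun a =>
    if a = C.label i then dual (C.parent i) a
    else dual (C.parent i) a - dual (C.parent i) (C.label i)
  else fun a => Pi.single a 1
termination_by (i : ℕ)
decreasing_by all_goals exact C.parent_lt i h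

theorem dual_of_pos {i : Fin r} (hi : 0 < (i : ℕ)) (a : Fin 3) :
    C.dual i a = if a = C.label i then C.dual (C.parent i) a
      else C.dual (C.parent i) a - C.dual (C.parent i) (C.label i) := by
  rw [dual, dif_pos hi]

theorem dual_of_not_pos {i : Fin r} (hi : ¬ 0 < (i : ℕ)) (a : Fin 3) :
    C.dual i a = Pi.single a 1 := by
  rw [dual, dif_neg hi]

theorem dual_dotProduct_cone (i : Fin r) (a b : Fin 3) :
    C.dual i a ⬝ᵥ C.cone i b = if a = b then 1 else 0 := by
  induction i using C.induction_on_parent generalizing a b with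
  | root i hi =>
    simp [C.cone_of_not_pos hi, C.dual_of_not_pos hi, Pi.single_apply, eq_comm]
  | step i hi ih =>
    have hv : ∀ c, C.dual (C.parent i) c ⬝ᵥ C.v (C.parent i) = 1 := fun c => by
      simp [v, dotProduct_sum, ih]
    rw [C.dual_of_pos hi, C.cone_of_pos hi, Function.update_apply]
    by_cases ha : a = C.label i <;> by_cases hb : b = C.label i
    · simp [ha, hb, hv]
    · simp [ha, hb, ih, Ne.symm hb]
    · simp [ha, hb, hv, sub_dotProduct]
    · simp [ha, hb, ih, sub_dotProduct, Ne.symm hb]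

theorem dual_dotProduct_v (i : Fin r) (a : Fin 3) : C.dual i a ⬝ᵥ C.v i = 1 := by
  simp [v, dotProduct_sum, dual_dotProduct_cone]

theorem cone_injective (i : Fin r) : Function.Injective (C.cone i) := by
  intro a b h
  have := C.dual_dotProduct_cone i a b
  rw [← h, C.dual_dotProduct_cone] at this
  simpa using this

theorem cone_ne_v (i : Fin r) (a : Fin 3) : C.cone i a ≠ C.v i := by
  obtain ⟨b, hb⟩ := exists_ne a
  intro h
  have := C.dual_dotProduct_cone i b a
  rw [h, C.dual_dotProduct_v, if_neg hb] at this
  exact one_ne_zero this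

def interiorCone (i : Fin r) : Set (Fin 3 → ℤ) := {x | ∀ a, 0 < C.dual i a ⬝ᵥ x}

theorem v_mem_interiorCone (i : Fin r) : C.v i ∈ C.interiorCone i := fun a => by
  rw [C.dual_dotProduct_v]; exact one_pos

theorem interiorCone_subset_parent {i : Fin r} (hi : 0 < (i : ℕ)) :
    C.interiorCone i ⊆ C.interiorCone (C.parent i) := by
  intro x hx a
  have hl := hx (C.label i)
  have ha := hx a
  rw [C.dual_of_pos hi, if_pos rfl] at hl
  rw [C.dual_of_pos hi] at ha
  split_ifs at ha with h
  · exact ha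
  · rw [sub_dotProduct] at ha; linarith

theorem v_parent_not_mem_interiorCone {i : Fin r} (hi : 0 < (i : ℕ)) :
    C.v (C.parent i) ∉ C.interiorCone i := by
  obtain ⟨a, ha⟩ := exists_ne (C.label i)
  intro h
  have := h a
  rw [C.dual_of_pos hi, if_neg ha, sub_dotProduct, C.dual_dotProduct_v, C.dual_dotProduct_v,
    sub_self] at this
  exact lt_irrefl 0 this

theorem disjoint_interiorCone_of_parent_eq {c c' : Fin r} (hc : 0 < (c : ℕ))
    (hc' : 0 < (c' : ℕ)) (hne : c ≠ c') (hpar : C.parent c = C.parent c') :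
    Disjoint (C.interiorCone c) (C.interiorCone c') := by
  have hlab := C.label_distinct c c' hc hc' hne hpar
  refine Set.disjoint_left.2 fun x h h' => ?_
  have a := h (C.label c')
  have a' := h' (C.label c)
  rw [C.dual_of_pos hc, if_neg hlab.symm, sub_dotProduct] at a
  rw [C.dual_of_pos hc', if_neg hlab, sub_dotProduct, ← hpar] at a'
  linarith

theorem pos_of_mem_interiorCone {i : Fin r} {x : Fin 3 → ℤ} (hx : x ∈ C.interiorCone i)
    (a : Fin 3) : 0 < x a := by
  induction i using C.induction_on_parent with
  | root i hi => simpa [C.dual_of_not_pos hi, single_dotProduct] using hx a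
  | step i hi ih => exact ih (C.interiorCone_subset_parent hi hx)

theorem v_ne_single (j : Fin r) (a : Fin 3) : C.v j ≠ Pi.single a 1 := by
  obtain ⟨b, hb⟩ := exists_ne a
  intro h
  have := C.pos_of_mem_interiorCone (C.v_mem_interiorCone j) b
  simp [h, hb] at this

theorem anc_iff {i j : Fin r} :
    C.anc i j = true ↔ i = j ∨ 0 < (j : ℕ) ∧ C.anc i (C.parent j) = true := by
  rw [anc]; split_ifs with h <;> simp [h]

theorem le_of_anc {i j : Fin r} (h : C.anc i j = true) : i ≤ j := by
  induction j using C.induction_on_parent with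
  | root j hj =>
    rcases C.anc_iff.1 h with rfl | ⟨hj', -⟩
    exacts [le_rfl, absurd hj' hj]
  | step j hj ih =>
    rcases C.anc_iff.1 h with rfl | ⟨-, h⟩
    exacts [le_rfl, (ih h).trans (C.parent_lt j hj).le]

theorem anc_of_not_pos {i : Fin r} (hi : ¬ 0 < (i : ℕ)) (j : Fin r) : C.anc i j = true := by
  induction j using C.induction_on_parent with
  | root j hj => exact C.anc_iff.2 (Or.inl (Fin.ext (by omega)))
  | step j hj ih => exact C.anc_iff.2 (Or.inr ⟨hj, ih⟩)

theorem interiorCone_subset_of_anc {i j : Fin r} (h : C.anc i j = true) :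
    C.interiorCone j ⊆ C.interiorCone i := by
  induction j using C.induction_on_parent with
  | root j hj =>
    rcases C.anc_iff.1 h with rfl | ⟨hj', -⟩
    exacts [subset_rfl, absurd hj' hj]
  | step j hj ih =>
    rcases C.anc_iff.1 h with rfl | ⟨-, h⟩
    exacts [subset_rfl, (C.interiorCone_subset_parent hj).trans (ih h)]

theorem eq_or_exists_isChild_anc {i j : Fin r} (h : C.anc i j = true) :
    j = i ∨ ∃ c, C.IsChild c i ∧ C.anc c j = true := by
  induction j using C.induction_on_parent with
  | root j hj =>
    rcases C.anc_iff.1 h with rfl | ⟨hj', -⟩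
    exacts [Or.inl rfl, absurd hj' hj]
  | step j hj ih =>
    rcases C.anc_iff.1 h with rfl | ⟨-, h⟩
    · exact Or.inl rfl
    rcases ih h with hp | ⟨c, hc, hcj⟩
    · exact Or.inr ⟨j, ⟨hj, hp⟩, C.anc_iff.2 (Or.inl rfl)⟩
    · exact Or.inr ⟨c, hc, C.anc_iff.2 (Or.inr ⟨hj, hcj⟩)⟩

/-- The interiors of the cones of the children of a node are disjoint and do not contain its
`v`, so the nodes whose interior contains `v k` form the path from the root to `k`. -/
theorem anc_of_v_mem_interiorCone {i k : Fin r} (h : C.v k ∈ C.interiorCone i) :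
    C.anc i k = true := by
  induction i using C.induction_on_parent with
  | root i hi => exact C.anc_of_not_pos hi k
  | step i hi ih =>
    rcases C.eq_or_exists_isChild_anc (ih (C.interiorCone_subset_parent hi h)) with
      rfl | ⟨c, hc, hck⟩
    · exact absurd h (C.v_parent_not_mem_interiorCone hi)
    obtain rfl : c = i := by
      by_contra hci
      refine Set.disjoint_left.1 (C.disjoint_interiorCone_of_parent_eq hc.1 hi hci hc.2) ?_ h
      exact C.interiorCone_subset_of_anc hck (C.v_mem_interiorCone k)
    exact hck

theorem v_injective : Function.Injective C.v := fun j k h =>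
  le_antisymm (C.le_of_anc (C.anc_of_v_mem_interiorCone (h ▸ C.v_mem_interiorCone j)))
    (C.le_of_anc (C.anc_of_v_mem_interiorCone (h ▸ C.v_mem_interiorCone k)))

theorem prox_iff {k j : Fin r} : C.Prox k j ↔ ∃ a, C.cone k a = C.v j := by
  refine ⟨And.right, fun ⟨a, ha⟩ => ⟨?_, a, ha⟩⟩
  rintro rfl
  exact C.cone_ne_v k a ha

theorem prox_parent {k : Fin r} (hk : 0 < (k : ℕ)) : C.Prox k (C.parent k) :=
  C.prox_iff.2 ⟨C.label k, C.cone_label hk⟩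

theorem prox_iff_label_ne {k p j : Fin r} (hk : C.IsChild k p) (hjp : j ≠ p) {c : Fin 3}
    (hc : C.cone p c = C.v j) : C.Prox k j ↔ C.label k ≠ c := by
  rw [prox_iff, C.cone_of_pos hk.1, hk.2]
  constructor
  · rintro ⟨a, ha⟩ rfl
    rw [Function.update_apply] at ha
    split_ifs at ha with h
    · exact hjp (C.v_injective ha).symm
    · exact h (C.cone_injective p (ha.trans hc.symm))
  · exact fun h => ⟨c, by rw [Function.update_of_ne h.symm, hc]⟩

theorem labelsUnder_of_pos {i : Fin r} (hi : 0 < (i : ℕ)) :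
    C.labelsUnder i = insert (C.label i) (C.labelsUnder (C.parent i)) := by
  rw [labelsUnder, dif_pos hi]

theorem labelsUnder_of_not_pos {i : Fin r} (hi : ¬ 0 < (i : ℕ)) : C.labelsUnder i = ∅ := by
  rw [labelsUnder, dif_neg hi]

theorem cone_of_not_mem_labelsUnder {i : Fin r} {a : Fin 3} (ha : a ∉ C.labelsUnder i) :
    C.cone i a = Pi.single a 1 := by
  induction i using C.induction_on_parent with
  | root i hi => rw [C.cone_of_not_pos hi]
  | step i hi ih =>
    rw [C.labelsUnder_of_pos hi, mem_insert, not_or] at ha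
    rw [C.cone_of_pos hi, Function.update_of_ne ha.1, ih ha.2]

theorem exists_cone_eq_v_of_mem_labelsUnder {i : Fin r} {a : Fin 3}
    (ha : a ∈ C.labelsUnder i) : ∃ j, C.cone i a = C.v j := by
  induction i using C.induction_on_parent with
  | root i hi => simp [C.labelsUnder_of_not_pos hi] at ha
  | step i hi ih =>
    rw [C.labelsUnder_of_pos hi, mem_insert] at ha
    by_cases hal : a = C.label i
    · exact ⟨C.parent i, hal ▸ C.cone_label hi⟩
    · obtain ⟨j, hj⟩ := ih (ha.resolve_left hal)
      exact ⟨j, by rw [C.cone_of_pos hi, Function.update_of_ne hal, hj]⟩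

theorem inChain_iff {i j : Fin r} {a b : Fin 3} :
    C.inChain i a b j = true ↔ 0 < (j : ℕ) ∧ (C.parent j = i ∧ C.label j = a ∨
      C.label j = b ∧ C.inChain i a b (C.parent j) = true) := by
  rw [inChain]; split_ifs with h <;> simp [h]

theorem lt_of_inChain {i j : Fin r} {a b : Fin 3} (h : C.inChain i a b j = true) : i < j := by
  induction j using C.induction_on_parent with
  | root j hj => exact absurd (C.inChain_iff.1 h).1 hj
  | step j hj ih =>
    rcases (C.inChain_iff.1 h).2 with ⟨rfl, -⟩ | ⟨-, h⟩
    exacts [C.parent_lt j hj, (ih h).trans (C.parent_lt j hj)]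

theorem inChain_iff_label_eq {i k : Fin r} (hk : C.IsChild k i) {a b : Fin 3} :
    C.inChain i a b k = true ↔ C.label k = a := by
  rw [inChain_iff, hk.2]
  refine ⟨fun ⟨_, h⟩ => ?_, fun h => ⟨hk.1, Or.inl ⟨rfl, h⟩⟩⟩
  rcases h with ⟨-, h⟩ | ⟨-, h⟩
  exacts [h, absurd (C.lt_of_inChain h) (lt_irrefl i)]

theorem linProx_of_isChild {k j : Fin r} (hk : C.IsChild k j) : C.LinProx k j := by
  obtain ⟨b, hb⟩ := exists_ne (C.label k)
  exact ⟨C.label k, b, hb.symm, (C.inChain_iff_label_eq hk).2 rfl⟩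

/-- If `k = P(x, y^t) = j(a, b^s)` with `P < j`, the edges from `j` to `k` all lie in the part
`y^t`, so `a ≠ b` forces `s = 0`. -/
theorem parent_eq_of_inChain_of_inChain {P j k : Fin r} {x y a b : Fin 3} (hab : a ≠ b)
    (hPj : P < j) (hk : C.inChain P x y k = true) (hjk : C.inChain j a b k = true) :
    C.parent k = j := by
  induction k using C.induction_on_parent with
  | root k hk0 => exact absurd (C.inChain_iff.1 hk).1 hk0
  | step k hk0 ih =>
    rcases (C.inChain_iff.1 hjk).2 with ⟨h, -⟩ | ⟨hkb, hjl⟩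
    · exact h
    exfalso
    have hjl' := C.lt_of_inChain hjl
    obtain ⟨-, ⟨hPl, -⟩ | ⟨hky, hl⟩⟩ := C.inChain_iff.1 hk
    · exact lt_asymm hPj (hPl ▸ hjl')
    have hll := ih hl hjl
    obtain ⟨-, ⟨-, hla⟩ | ⟨-, hjj⟩⟩ := C.inChain_iff.1 hjl
    · obtain ⟨-, ⟨hPj', -⟩ | ⟨hly, -⟩⟩ := C.inChain_iff.1 hl
      · exact hPj.ne (hPj'.symm.trans hll)
      · exact hab (hla.symm.trans (hly.trans (hky.symm.trans hkb)))
    · exact lt_irrefl j (C.lt_of_inChain (hll ▸ hjj))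

theorem lt_of_isChild {k p : Fin r} (hk : C.IsChild k p) : p < k :=
  hk.2 ▸ C.parent_lt k hk.1

theorem filter_insert_linProx_of_mem {P j : Fin r} {K : Finset (Fin r)}
    (hK : ∀ k ∈ K, ∃ x y, C.inChain P x y k = true) (hj : j ∈ K) :
    (insert P K).filter (fun k => C.LinProx k j) = K.filter (fun k => C.parent k = j) := by
  obtain ⟨x, y, hPj⟩ := hK j hj
  ext k
  simp only [mem_filter, mem_insert]
  constructor
  · rintro ⟨rfl | hk, a, b, hab, hjk⟩
    · exact absurd (C.lt_of_inChain hPj) (C.lt_of_inChain hjk).not_gt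
    · obtain ⟨x', y', hPk⟩ := hK k hk
      exact ⟨hk, C.parent_eq_of_inChain_of_inChain hab (C.lt_of_inChain hPj) hPk hjk⟩
  · rintro ⟨hk, rfl⟩
    obtain ⟨x', y', hPk⟩ := hK k hk
    exact ⟨Or.inr hk, C.linProx_of_isChild ⟨(C.inChain_iff.1 hPk).1, rfl⟩⟩

theorem filter_parent_notMem {P : Fin r} {K : Finset (Fin r)}
    (hK : ∀ k, k ∈ K ↔ C.inChain P 1 2 k = true ∨ C.inChain P 2 1 k = true) :
    K.filter (fun k => C.parent k ∉ K) =
      univ.filter (fun k => C.IsChild k P ∧ C.label k ≠ 0) := by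
  have hPK : P ∉ K := fun h =>
    ((hK P).1 h).elim (fun h => lt_irrefl P (C.lt_of_inChain h))
      (fun h => lt_irrefl P (C.lt_of_inChain h))
  ext k
  simp only [mem_filter, mem_univ, true_and]
  constructor
  · rintro ⟨hk, hpk⟩
    rw [hK] at hpk
    rcases (hK k).1 hk with h | h <;>
      obtain ⟨hk0, ⟨hkP, hl⟩ | ⟨-, h⟩⟩ := C.inChain_iff.1 h
    · exact ⟨⟨hk0, hkP⟩, by rw [hl]; decide⟩
    · exact absurd (Or.inl h) hpk
    · exact ⟨⟨hk0, hkP⟩, by rw [hl]; decide⟩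
    · exact absurd (Or.inr h) hpk
  · rintro ⟨hkP, hk0⟩
    refine ⟨(hK k).2 ?_, hkP.2 ▸ hPK⟩
    rw [C.inChain_iff_label_eq hkP, C.inChain_iff_label_eq hkP]
    revert hk0
    generalize C.label k = l
    fin_cases l <;> simp

end ToricConstellation

theorem Finset.sum_card_filter_eq_card_filter_mem {α : Type*} [DecidableEq α] (s : Finset α)
    (f : α → α) :
    ∑ j ∈ s, (s.filter (fun k => f k = j)).card = (s.filter (fun k => f k ∈ s)).card := by
  rw [card_eq_sum_card_fiberwise (s := s.filter (fun k => f k ∈ s)) (f := f) (t := s)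
    fun k hk => (mem_filter.1 hk).2]
  refine sum_congr rfl fun j hj => ?_
  rw [filter_filter]
  congr 1
  ext k
  simp only [mem_filter]
  constructor
  · rintro ⟨hk, rfl⟩; exact ⟨hk, hj, rfl⟩
  · exact fun ⟨hk, _, h⟩ => ⟨hk, h⟩

namespace ToricCluster

variable {r : ℕ} (A : ToricCluster r)

theorem mem_proxSet {i j : Fin r} : j ∈ A.proxSet i ↔ A.Prox j i := by simp [proxSet]

theorem mem_Bset {i j : Fin r} : j ∈ A.Bset i ↔ A.Prox i j := by simp [Bset]

theorem sum_m_eq_card {s : Finset (Fin r)} (h : ∀ k ∈ s, A.m k = 1) :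
    ∑ k ∈ s, A.m k = s.card := by
  simp [sum_congr rfl h]

theorem sum_le_of_forall_inChain (hA : A.Idealistic) {i : Fin r} {a b : Fin 3} (hab : a ≠ b)
    {s : Finset (Fin r)} (hs : ∀ j ∈ s, A.inChain i a b j = true) :
    ∑ j ∈ s, A.m j ≤ A.m i :=
  calc ∑ j ∈ s, A.m j ≤ A.M i a b :=
        sum_le_sum_of_subset_of_nonneg (fun j hj => by simp [hs j hj])
          fun j _ _ => (A.m_pos j).le
    _ ≤ A.M i a b + A.M i b a := le_add_of_nonneg_right (sum_nonneg fun j _ => (A.m_pos j).le)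
    _ ≤ A.m i := hA i a b hab

theorem eq_or_isChild_of_inChain (hA : A.Idealistic) {i P : Fin r}
    (hchild : ∀ k, A.IsChild k i ↔ k = P) (hmP : A.m i < A.m P + 2) {a b : Fin 3}
    (hab : a ≠ b) {k : Fin r} (hk : A.inChain i a b k = true) :
    k = P ∨ A.IsChild k P ∧ A.label k = b ∧ A.label P = a := by
  have hP := (hchild P).2 rfl
  induction k using A.induction_on_parent with
  | root k hk0 => exact absurd (A.inChain_iff.1 hk).1 hk0
  | step k hk0 ih =>
    obtain ⟨-, ⟨hki, -⟩ | ⟨hkb, hl⟩⟩ := A.inChain_iff.1 hk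
    · exact Or.inl ((hchild k).1 ⟨hk0, hki⟩)
    rcases ih hl with hlP | ⟨hlP, -, hPa⟩
    · rw [hlP] at hl
      exact Or.inr ⟨⟨hk0, hlP⟩, hkb, (A.inChain_iff_label_eq hP).1 hl⟩
    · -- `P`, its child `parent k` and `k` would carry a weight exceeding `m i`
      have hPl := A.lt_of_isChild hlP
      have hlk : A.parent k < k := A.parent_lt k hk0
      have hP' := (A.inChain_iff_label_eq hP (b := b)).2 hPa
      have h3 := A.sum_le_of_forall_inChain hA hab (i := i) (s := {P, A.parent k, k})
        (by simp [hP', hl, hk])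
      rw [sum_insert (by simp [hPl.ne, (hPl.trans hlk).ne]), sum_pair hlk.ne] at h3
      linarith [A.m_pos (A.parent k), A.m_pos k]

theorem linProx_iff_of_unique_child (hA : A.Idealistic) {i P : Fin r}
    (hchild : ∀ k, A.IsChild k i ↔ k = P) (hmP : A.m i < A.m P + 2) {k : Fin r} :
    A.LinProx k i ↔ k = P ∨ A.IsChild k P ∧ A.label k ≠ A.label P := by
  have hP := (hchild P).2 rfl
  constructor
  · rintro ⟨a, b, hab, hk⟩
    refine (A.eq_or_isChild_of_inChain hA hchild hmP hab hk).imp_right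
      fun ⟨hkP, hkb, hPa⟩ => ⟨hkP, ?_⟩
    rw [hkb, hPa]
    exact hab.symm
  · rintro (rfl | ⟨hkP, hkl⟩)
    · exact A.linProx_of_isChild hP
    · refine ⟨A.label P, A.label k, hkl.symm,
        A.inChain_iff.2 ⟨hkP.1, Or.inr ⟨rfl, ?_⟩⟩⟩
      rw [hkP.2]
      exact (A.inChain_iff_label_eq hP).2 rfl

theorem filter_proxSet_linProx_eq (hA : A.Idealistic) {i P : Fin r}
    (hchild : ∀ k, A.IsChild k i ↔ k = P) (hmP : A.m i < A.m P + 2) {c : Fin 3}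
    (hc : c ≠ A.label P) {j : Fin r} (hj : A.cone i c = A.v j) :
    (A.proxSet j).filter (fun k => A.LinProx k i) =
      insert P (univ.filter fun k =>
        A.IsChild k P ∧ A.label k ≠ A.label P ∧ A.label k ≠ c) := by
  have hPc : A.cone P c = A.v j := (A.cone_of_isChild_of_ne ((hchild P).2 rfl) hc).trans hj
  have hjP : j ≠ P := fun h => A.cone_ne_v P c (h ▸ hPc)
  ext k
  simp only [mem_filter, mem_proxSet, mem_insert, mem_univ, true_and,
    A.linProx_iff_of_unique_child hA hchild hmP]
  constructor
  · rintro ⟨hkj, rfl | ⟨hkP, hkl⟩⟩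
    · exact Or.inl rfl
    · exact Or.inr ⟨hkP, hkl, (A.prox_iff_label_ne hkP hjP hPc).1 hkj⟩
  · rintro (rfl | ⟨hkP, hkl, hkc⟩)
    · exact ⟨A.prox_iff.2 ⟨c, hPc⟩, Or.inl rfl⟩
    · exact ⟨(A.prox_iff_label_ne hkP hjP hPc).2 hkc, Or.inr ⟨hkP, hkl⟩⟩

theorem sum_pair_sub_sum_linProx (hA : A.Idealistic) {i P : Fin r}
    (hchild : ∀ k, A.IsChild k i ↔ k = P) (hPlab : A.label P = 0) (hmP : A.m i < A.m P + 2)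
    {j₁ j₂ : Fin r} (hj : j₁ ≠ j₂) (hj₁ : A.cone i 1 = A.v j₁)
    (hj₂ : A.cone i 2 = A.v j₂) :
    ∑ j ∈ {j₁, j₂},
        (A.m i - ∑ k ∈ (A.proxSet j).filter (fun k => A.LinProx k i), A.m k) =
      2 * (A.m i - A.m P) -
        ∑ k ∈ univ.filter (fun k => A.IsChild k P ∧ A.label k ≠ 0), A.m k := by
  have hPL : ∀ c, P ∉ univ.filter
      (fun k => A.IsChild k P ∧ A.label k ≠ A.label P ∧ A.label k ≠ c) :=
    fun c h => lt_irrefl P (A.lt_of_isChild (mem_filter.1 h).2.1)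
  rw [sum_pair hj, A.filter_proxSet_linProx_eq hA hchild hmP (by rw [hPlab]; decide) hj₁,
    A.filter_proxSet_linProx_eq hA hchild hmP (by rw [hPlab]; decide) hj₂, sum_insert (hPL 1),
    sum_insert (hPL 2), hPlab, sum_filter, sum_filter, sum_filter]
  have hsplit : ∀ k,
      ((if A.IsChild k P ∧ A.label k ≠ 0 ∧ A.label k ≠ 1 then A.m k else 0) +
        if A.IsChild k P ∧ A.label k ≠ 0 ∧ A.label k ≠ 2 then A.m k else 0) =
      if A.IsChild k P ∧ A.label k ≠ 0 then A.m k else 0 := fun k => by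
    by_cases hk : A.IsChild k P
    · generalize A.label k = l
      fin_cases l <;> simp [hk]
    · simp [hk]
  simp only [← hsplit, sum_add_distrib]
  ring

theorem sum_proxSet_sub_sum_linProx {i P : Fin r} (hPi : A.Prox P i)
    (hproxchar : ∀ j : Fin r, (A.Prox j i ∧ j ≠ P) ↔
      (A.inChain P 1 2 j = true ∨ A.inChain P 2 1 j = true))
    (hw : ∀ j, A.Prox j i → j ≠ P → A.m j = 1)
    (hmP : A.m P = ((A.proxSet i).erase P).card) :
    ∑ j ∈ A.proxSet i,
        (A.m j - ∑ k ∈ (A.proxSet i).filter (fun k => A.LinProx k j), A.m k) =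
      (univ.filter fun k => A.IsChild k P ∧ A.label k ≠ 0).card := by
  set K := (A.proxSet i).erase P
  have hK : ∀ k, k ∈ K ↔ A.inChain P 1 2 k = true ∨ A.inChain P 2 1 k = true := fun k => by
    rw [mem_erase, mem_proxSet, and_comm, hproxchar]
  have hKchain : ∀ k ∈ K, ∃ x y, A.inChain P x y k = true := fun k hk =>
    ((hK k).1 hk).elim (fun h => ⟨1, 2, h⟩) fun h => ⟨2, 1, h⟩
  have hKw : ∀ k ∈ K, A.m k = 1 := fun k hk => by
    rw [mem_erase, mem_proxSet] at hk
    exact hw k hk.2 hk.1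
  have hfilterP : (insert P K).filter (fun k => A.LinProx k P) = K := by
    ext k
    simp only [mem_filter, mem_insert]
    constructor
    · rintro ⟨rfl | hk, a, b, -, h⟩
      exacts [absurd (A.lt_of_inChain h) (lt_irrefl k), hk]
    · intro hk
      refine ⟨Or.inr hk, ((hK k).1 hk).elim (fun h => ⟨1, 2, by decide, h⟩)
        fun h => ⟨2, 1, by decide, h⟩⟩
  rw [← insert_erase (A.mem_proxSet.2 hPi), sum_insert (notMem_erase P _), hfilterP,
    A.sum_m_eq_card hKw, ← hmP, sub_self, zero_add]
  rw [sum_congr rfl fun j hj => by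
    rw [A.filter_insert_linProx_of_mem hKchain hj, hKw j hj,
      A.sum_m_eq_card fun k hk => hKw k (mem_filter.1 hk).1]]
  rw [sum_sub_distrib, ← A.filter_parent_notMem hK, sum_const, nsmul_one, ← Nat.cast_sum,
    sum_card_filter_eq_card_filter_mem, ← card_filter_add_card_filter_not (s := K)
      (fun k => A.parent k ∈ K)]
  push_cast
  ring

theorem sum_proxSet_mul_sub_one {i P : Fin r} (hPi : A.Prox P i)
    (hw : ∀ j, A.Prox j i → j ≠ P → A.m j = 1) :
    ∑ j ∈ A.proxSet i, A.m j * (A.m j - 1) = A.m P * (A.m P - 1) :=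
  sum_eq_single_of_mem P (A.mem_proxSet.2 hPi) fun j hj hjP => by
    rw [hw j (A.mem_proxSet.1 hj) hjP, sub_self, mul_zero]

theorem Bset_eq_pair {i : Fin r} {a b : Fin 3} (hS : A.labelsUnder i = {a, b}) {j₁ j₂ : Fin r}
    (hj₁ : A.cone i a = A.v j₁) (hj₂ : A.cone i b = A.v j₂) : A.Bset i = {j₁, j₂} := by
  ext j
  rw [mem_Bset, prox_iff, mem_insert, mem_singleton]
  constructor
  · rintro ⟨c, hc⟩
    by_cases hcS : c ∈ A.labelsUnder i
    · rw [hS, mem_insert, mem_singleton] at hcS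
      rcases hcS with rfl | rfl
      exacts [Or.inl (A.v_injective (hc.symm.trans hj₁)),
        Or.inr (A.v_injective (hc.symm.trans hj₂))]
    · exact absurd (hc.symm.trans (A.cone_of_not_mem_labelsUnder hcS)) (A.v_ne_single j c)
  · rintro (rfl | rfl)
    exacts [⟨a, hj₁⟩, ⟨b, hj₂⟩]

theorem Aset_eq_empty {i P : Fin r} (hchild : ∀ k, A.IsChild k i ↔ k = P) {c : Fin 3}
    (hc : c ≠ A.label P) {j : Fin r} (hj : A.cone i c = A.v j) : A.Aset i = ∅ := by
  refine eq_empty_of_forall_notMem fun k hk => ?_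
  obtain ⟨hki, hno⟩ := (mem_filter.1 hk).2
  obtain rfl := (hchild k).1 hki
  exact hno ⟨j, A.prox_iff.2 ⟨c, hj⟩,
    A.prox_iff.2 ⟨c, (A.cone_of_isChild_of_ne hki hc).trans hj⟩⟩

end ToricCluster

theorem stmt19_general {r : ℕ} (A : ToricCluster r) (hA : A.Idealistic)
    (i P : Fin r) (mm : ℕ) (hmi : A.m i = (mm : ℤ))
    (hchild : Finset.univ.filter
        (fun j => IsChild A.toToricConstellation j i) = {P})
    (hPlab : A.toToricConstellation.label P = 0)
    (hmP : A.m P = (mm : ℤ) - 1)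
    (hproxchar : ∀ j : Fin r, (Prox A.toToricConstellation j i ∧ j ≠ P) ↔
        (inChain A.toToricConstellation P 1 2 j = true
          ∨ inChain A.toToricConstellation P 2 1 j = true))
    (hcard : (Finset.univ.filter
        (fun j => Prox A.toToricConstellation j i ∧ j ≠ P)).card = mm - 1)
    (hw : ∀ j, Prox A.toToricConstellation j i → j ≠ P → A.m j = 1)
    (hS : labelsUnder A.toToricConstellation i = {1, 2}) :
    A.chi i = 0 := by
  have hchild' : ∀ k, A.IsChild k i ↔ k = P := fun k => by
    simpa using Finset.ext_iff.1 hchild k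
  have hP := (hchild' P).2 rfl
  have hPi : A.Prox P i := hP.2 ▸ A.prox_parent hP.1
  have hmm : 1 ≤ mm := by have := A.m_pos i; omega
  have hmP_card : A.m P = ((A.proxSet i).erase P).card := by
    rw [← filter_ne', proxSet, filter_filter, hcard, hmP]
    push_cast [hmm]
    ring
  have hmi_lt : A.m i < A.m P + 2 := by rw [hmi, hmP]; linarith
  obtain ⟨j₁, hj₁⟩ := A.exists_cone_eq_v_of_mem_labelsUnder (i := i) (a := 1) (by simp [hS])
  obtain ⟨j₂, hj₂⟩ := A.exists_cone_eq_v_of_mem_labelsUnder (i := i) (a := 2) (by simp [hS])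
  have hj : j₁ ≠ j₂ := fun h =>
    absurd (A.cone_injective i (hj₁.trans (h ▸ hj₂.symm))) (by decide)
  have hL : ∀ k ∈ univ.filter (fun k => A.IsChild k P ∧ A.label k ≠ 0), A.m k = 1 := by
    intro k hk
    obtain ⟨hkP, hk0⟩ := (mem_filter.1 hk).2
    have := (hproxchar k).2 (by rw [A.inChain_iff_label_eq hkP, A.inChain_iff_label_eq hkP]; omega)
    exact hw k this.1 this.2
  rw [chi, A.sum_proxSet_mul_sub_one hPi hw,
    A.sum_proxSet_sub_sum_linProx hPi hproxchar hw hmP_card, A.Bset_eq_pair hS hj₁ hj₂,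
    A.sum_pair_sub_sum_linProx hA hchild' hPlab hmi_lt hj hj₁ hj₂,
    A.sum_m_eq_card hL, A.Aset_eq_empty hchild' (by rw [hPlab]; decide) hj₁, card_pair hj,
    card_empty, Nat.choose_self, hmi, hmP]
  push_cast
  ring

theorem stmt19 {r : ℕ} (A : ToricCluster r) (hA : A.Idealistic)
    (i P : Fin r) (mm : ℕ) (hmm : 2 ≤ mm) (hmi : A.m i = (mm : ℤ))
    (hchild : Finset.univ.filter
        (fun j => IsChild A.toToricConstellation j i) = {P})
    (hPlab : A.toToricConstellation.label P = 0)
    (hmP : A.m P = (mm : ℤ) - 1)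
    (hproxchar : ∀ j : Fin r, (Prox A.toToricConstellation j i ∧ j ≠ P) ↔
        (inChain A.toToricConstellation P 1 2 j = true
          ∨ inChain A.toToricConstellation P 2 1 j = true))
    (hcard : (Finset.univ.filter
        (fun j => Prox A.toToricConstellation j i ∧ j ≠ P)).card = mm - 1)
    (hw : ∀ j, Prox A.toToricConstellation j i → j ≠ P → A.m j = 1)
    (hS : labelsUnder A.toToricConstellation i = {1, 2}) :
    A.chi i = 0 :=
  stmt19_general A hA i P mm hmi hchild hPlab hmP hproxchar hcard hw hS
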